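/- arXiv:1401.0700 — 7 statements merged into one kernel-verified Lean document; each statement's English description precedes it below -/
import Mathlib

section
/- Let f(h) = h² + 2h − 3/4 ∈ ℂ[h]. Then f(h) − h = (h + 3/2)(h − 1/2) and f(f(h)) − h = (h + 3/2)³(h − 1/2) as polynomials in ℂ[h]. Consequently every solution of f(f(c)) = c in ℂ already satisfies f(c) = c; in particular f has no point of exact period 2. -/
/-! Both `f ∘ f - X` and `f - X` are products of the linear factors `X + 3/2` and `X - 1/2`,
so over a domain they have the same roots. -/

open Polynomial

theorem Polynomial.IsRoot.mul_of_pow_mul {R : Type*} [CommRing R] [IsDomain R] {a b : R[X]}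
    {n : ℕ} {c : R} (hn : n ≠ 0) (h : (a ^ n * b).IsRoot c) : (a * b).IsRoot c := by
  simpa only [IsRoot, eval_mul, eval_pow, mul_eq_zero, pow_eq_zero_iff hn] using h

/-- For `f(h) = h² + 2h − 3/4`, we have `f(h) − h = (h + 3/2)(h − 1/2)` and
`f(f(h)) − h = (h + 3/2)³(h − 1/2)`; consequently every solution of `f(f(c)) = c`
already satisfies `f(c) = c`, so `f` has no point of exact period 2. -/
theorem no_exact_period_two :
    letI f : Polynomial ℂ := X ^ 2 + C 2 * X - C (3 / 4)
    f - X = (X + C (3 / 2)) * (X - C (1 / 2)) ∧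
    f.comp f - X = (X + C (3 / 2)) ^ 3 * (X - C (1 / 2)) ∧
    ∀ c : ℂ, f.eval (f.eval c) = c → f.eval c = c := by
  set f : ℂ[X] := X ^ 2 + C 2 * X - C (3 / 4) with hf
  have hfix : f - X = (X + C (3 / 2)) * (X - C (1 / 2)) := by
    refine Polynomial.funext fun x => ?_
    simp only [hf, eval_sub, eval_add, eval_mul, eval_pow, eval_X, eval_C]
    ring
  have hper : f.comp f - X = (X + C (3 / 2)) ^ 3 * (X - C (1 / 2)) := by
    refine Polynomial.funext fun x => ?_
    simp only [hf, eval_comp, eval_sub, eval_add, eval_mul, eval_pow, eval_X, eval_C]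
    ring
  refine ⟨hfix, hper, fun c hc => ?_⟩
  have hroot : (f.comp f - X).IsRoot c := by
    simp only [IsRoot, eval_sub, eval_comp, eval_X, hc, sub_self]
  rw [hper] at hroot
  have hfixroot := hroot.mul_of_pow_mul three_ne_zero
  rw [← hfix] at hfixroot
  simpa only [IsRoot, eval_sub, eval_X, sub_eq_zero] using hfixroot
end

section
/- Let f ∈ ℂ[h], n ≥ 1, and ż ∈ ℂ with ż + f^{(n)}(−ż) = 0. Define linear operators X, H, Y on V = ℂ^n (with basis e_0, …, e_{n−1}) by: X e_i = e_{i+1} for i < n−1 and X e_{n−1} = 0; H e_i = f^{(i)}(−ż) e_i; Y e_0 = 0 and Y e_i = (ż + f^{(i)}(−ż)) e_{i−1} for i ≥ 1. Then these operators satisfy H∘X = X∘f(H), Y∘H = f(H)∘Y, and Y∘X − X∘Y = f(H) − H, where f(H) is the operator obtained by evaluating the polynomial f at H. -/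
/-!
On the basis `e₀, …, e_{n-1}`, `X` is the lower shift and `H` is diagonal with entries
`aₖ = f^{(k)}(-ż)`, so `f(H)` is diagonal with entries `a_{k+1}`; the first two relations say
that `X` and `Y` move the index of these eigenvalues by one. `Y` is the upper shift with weights
`wₖ = ż + aₖ`, and `Y X - X Y` is diagonal with entries `w_{k+1} - w_k = a_{k+1} - a_k`, provided
both boundary weights vanish: `w₀ = 0` always, and `wₙ = 0` is the hypothesis on `ż`.
-/

open Polynomial Matrix

namespace Matrix

variable {R : Type*} (n : ℕ)

def lowerShift [Zero R] [One R] : Matrix (Fin n) (Fin n) R :=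
  of fun i j => if (i : ℕ) = (j : ℕ) + 1 then 1 else 0

def weightedUpperShift [Zero R] (w : ℕ → R) : Matrix (Fin n) (Fin n) R :=
  of fun i j => if (j : ℕ) = (i : ℕ) + 1 then w j else 0

variable {n}

theorem aeval_diagonal {ι : Type*} [Fintype ι] [DecidableEq ι] [CommSemiring R] (d : ι → R)
    (p : R[X]) : aeval (diagonal d) p = diagonal fun i => p.eval (d i) := by
  rw [← diagonalAlgHom_apply R, aeval_algHom_apply, diagonalAlgHom_apply]
  congr 1
  funext i
  rw [aeval_fn_apply, aeval_def, eval₂_eq_eval_map, Algebra.algebraMap_self, Polynomial.map_id]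

theorem diagonal_mul_lowerShift [NonAssocSemiring R] (d : ℕ → R) :
    diagonal (fun i : Fin n => d i) * lowerShift n =
      lowerShift n * diagonal fun i : Fin n => d ((i : ℕ) + 1) := by
  ext i j
  by_cases h : (i : ℕ) = j + 1 <;> simp [lowerShift, h]

theorem weightedUpperShift_mul_diagonal [CommSemiring R] (w d : ℕ → R) :
    weightedUpperShift n w * diagonal (fun i : Fin n => d i) =
      diagonal (fun i : Fin n => d ((i : ℕ) + 1)) * weightedUpperShift n w := by
  ext i j
  by_cases h : (j : ℕ) = i + 1 <;> simp [weightedUpperShift, h, mul_comm]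

theorem weightedUpperShift_mul_lowerShift [NonAssocSemiring R] (w : ℕ → R) :
    weightedUpperShift n w * lowerShift n =
      diagonal fun i : Fin n => if (i : ℕ) + 1 < n then w ((i : ℕ) + 1) else 0 := by
  ext i j
  simp only [mul_apply, weightedUpperShift, lowerShift, of_apply, mul_ite, mul_one, mul_zero,
    diagonal_apply]
  rw [Fin.sum_univ_eq_sum_range (fun k => if k = j + 1 then if k = i + 1 then w k else 0 else 0),
    Finset.sum_ite_eq']
  split_ifs <;> grind

theorem lowerShift_mul_weightedUpperShift [NonAssocSemiring R] (w : ℕ → R) (hw : w 0 = 0) :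
    lowerShift n * weightedUpperShift n w = diagonal fun i : Fin n => w i := by
  ext i j
  simp only [mul_apply, weightedUpperShift, lowerShift, of_apply, mul_ite, mul_zero, ite_mul,
    one_mul, zero_mul, diagonal_apply]
  rw [Fin.sum_univ_eq_sum_range (fun k => if j = k + 1 then if i = k + 1 then w j else 0 else 0)]
  obtain ⟨_ | m, hm⟩ := j
  · rw [Finset.sum_eq_zero fun k _ => if_neg (Nat.succ_ne_zero k).symm]
    split_ifs with h
    · rw [h]
      exact hw.symm
    · rfl
  · simp only [Nat.add_right_cancel_iff, eq_comm (a := m + 1)]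
    rw [Finset.sum_ite_eq']
    split_ifs <;> grind

theorem weightedUpperShift_mul_lowerShift_sub [Ring R] (w : ℕ → R) (h₀ : w 0 = 0) (hₙ : w n = 0) :
    weightedUpperShift n w * lowerShift n - lowerShift n * weightedUpperShift n w =
      diagonal fun i : Fin n => w ((i : ℕ) + 1) - w i := by
  rw [weightedUpperShift_mul_lowerShift, lowerShift_mul_weightedUpperShift w h₀, diagonal_sub]
  congr 1
  funext i
  split_ifs with h
  · rfl
  · rw [show (i : ℕ) + 1 = n by omega, hₙ]

end Matrix

theorem C_module_relations_general (f : Polynomial ℂ) (n : ℕ) (zdot : ℂ)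
    (hz : zdot + (fun c : ℂ => f.eval c)^[n] (-zdot) = 0) :
    letI φ : ℂ → ℂ := fun c => f.eval c
    letI X : Matrix (Fin n) (Fin n) ℂ :=
      Matrix.of fun i j => if (i : ℕ) = (j : ℕ) + 1 then 1 else 0
    letI H : Matrix (Fin n) (Fin n) ℂ :=
      Matrix.diagonal fun i => φ^[(i : ℕ)] (-zdot)
    letI Y : Matrix (Fin n) (Fin n) ℂ :=
      Matrix.of fun i j => if (j : ℕ) = (i : ℕ) + 1 then zdot + φ^[(j : ℕ)] (-zdot) else 0
    H * X = X * aeval H f ∧ Y * H = aeval H f * Y ∧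
      Y * X - X * Y = aeval H f - H := by
  set a : ℕ → ℂ := fun k => (fun c : ℂ => f.eval c)^[k] (-zdot)
  have hfH : aeval (diagonal fun i : Fin n => a i) f =
      diagonal fun i : Fin n => a ((i : ℕ) + 1) := by
    rw [aeval_diagonal]
    simp only [a, Function.iterate_succ_apply']
  show diagonal (fun i : Fin n => a i) * lowerShift n = lowerShift n * aeval _ f ∧
    weightedUpperShift n (fun k => zdot + a k) * diagonal (fun i : Fin n => a i) =
      aeval _ f * weightedUpperShift n (fun k => zdot + a k) ∧
    weightedUpperShift n (fun k => zdot + a k) * lowerShift n -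
      lowerShift n * weightedUpperShift n (fun k => zdot + a k) =
      aeval _ f - diagonal (fun i : Fin n => a i)
  rw [hfH, ← weightedUpperShift_mul_diagonal,
    weightedUpperShift_mul_lowerShift_sub _ (add_neg_cancel zdot) hz, diagonal_sub]
  refine ⟨diagonal_mul_lowerShift a, rfl, ?_⟩
  simp only [add_sub_add_left_eq_sub]

/-- The operators of the module `C(ż, n)` on `ℂⁿ` satisfy the defining relations
of the generalized Heisenberg algebra `H(f)`:
`H X = X f(H)`, `Y H = f(H) Y`, `Y X − X Y = f(H) − H`. -/
theorem C_module_relations (f : Polynomial ℂ) (n : ℕ) (hn : 1 ≤ n) (zdot : ℂ)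
    (hz : zdot + (fun c : ℂ => f.eval c)^[n] (-zdot) = 0) :
    letI φ : ℂ → ℂ := fun c => f.eval c
    letI X : Matrix (Fin n) (Fin n) ℂ :=
      Matrix.of fun i j => if (i : ℕ) = (j : ℕ) + 1 then 1 else 0
    letI H : Matrix (Fin n) (Fin n) ℂ :=
      Matrix.diagonal fun i => φ^[(i : ℕ)] (-zdot)
    letI Y : Matrix (Fin n) (Fin n) ℂ :=
      Matrix.of fun i j => if (j : ℕ) = (i : ℕ) + 1 then zdot + φ^[(j : ℕ)] (-zdot) else 0
    H * X = X * aeval H f ∧ Y * H = aeval H f * Y ∧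
      Y * X - X * Y = aeval H f - H :=
  C_module_relations_general f n zdot hz
end

section
/- With the setup of the module C(ż, n) on ℂ^n (operators X, H, Y as defined via f^{(i)}(−ż)), if moreover ż + f^{(i)}(−ż) ≠ 0 for all i = 1, …, n−1, then the only subspaces of ℂ^n invariant under all three operators X, H, Y are 0 and ℂ^n. -/
/-!
If `v` is a nonzero vector whose top nonzero coordinate is `v k` with `k ≥ 1`, then `Y v` is
nonzero with top coordinate `(ż + f^{(k)}(−ż)) v k` at index `k - 1`. Iterating, every nonzero
invariant subspace contains a vector supported at index `0`, hence `e₀`, and applying `X`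
repeatedly it contains the whole basis `e₀, …, e_{n-1}`.
-/

open Polynomial Matrix

namespace Matrix

variable (R : Type*) [Semiring R] (n : ℕ)

def raisingMatrix : Matrix (Fin n) (Fin n) R :=
  of fun i j => if (i : ℕ) = (j : ℕ) + 1 then 1 else 0

variable {R n}

def loweringMatrix (c : ℕ → R) : Matrix (Fin n) (Fin n) R :=
  of fun i j => if (j : ℕ) = (i : ℕ) + 1 then c j else 0

theorem raisingMatrix_mulVec_single_castSucc {m : ℕ} (i : Fin m) :
    raisingMatrix R (m + 1) *ᵥ Pi.single i.castSucc 1 = Pi.single i.succ 1 := by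
  ext j
  simp [raisingMatrix, Pi.single_apply, Fin.ext_iff]

theorem loweringMatrix_mulVec_apply (c : ℕ → R) (v : Fin n → R) (i : Fin n) :
    (loweringMatrix c *ᵥ v) i = if h : (i : ℕ) + 1 < n then c (i + 1) * v ⟨i + 1, h⟩ else 0 := by
  simp only [loweringMatrix, mulVec, dotProduct, of_apply, ite_mul, zero_mul]
  split_ifs with h
  · rw [Finset.sum_eq_single_of_mem (⟨i + 1, h⟩ : Fin n) (Finset.mem_univ _)]
    · simp
    · intro j _ hj
      rw [if_neg (fun h' => hj (Fin.ext h'))]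
  · exact Finset.sum_eq_zero fun j _ => if_neg (by omega)

theorem loweringMatrix_mulVec_apply_eq_zero (c : ℕ → R) {v : Fin n → R} {k : ℕ}
    (hv : ∀ i : Fin n, k + 1 < i → v i = 0) (i : Fin n) (hi : k < i) :
    (loweringMatrix c *ᵥ v) i = 0 := by
  rw [loweringMatrix_mulVec_apply]
  split_ifs with h
  · rw [hv _ (by simp only; omega), mul_zero]
  · rfl

theorem eq_single_zero_of_forall_pos_eq_zero [NeZero n] {v : Fin n → R}
    (hv : ∀ i : Fin n, 0 < (i : ℕ) → v i = 0) : v = Pi.single 0 (v 0) := by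
  ext i
  rcases Nat.eq_zero_or_pos (i : ℕ) with h | h
  · obtain rfl : i = 0 := Fin.ext h
    simp
  · rw [hv i h, Pi.single_eq_of_ne (fun h' => by simp [h'] at h)]

theorem single_mem_of_raisingMatrix_invariant {m : ℕ} {W : Submodule R (Fin (m + 1) → R)}
    (hX : ∀ v ∈ W, raisingMatrix R (m + 1) *ᵥ v ∈ W) (h0 : Pi.single 0 1 ∈ W) (j : Fin (m + 1)) :
    Pi.single j 1 ∈ W := by
  induction j using Fin.induction with
  | zero => exact h0
  | succ i ih => exact raisingMatrix_mulVec_single_castSucc (R := R) i ▸ hX _ ih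

theorem eq_top_of_forall_single_mem {ι : Type*} [Fintype ι] [DecidableEq ι]
    {W : Submodule R (ι → R)} (h : ∀ i, Pi.single i (1 : R) ∈ W) : W = ⊤ := by
  rw [eq_top_iff, ← (Pi.basisFun R ι).span_eq, Submodule.span_le]
  rintro _ ⟨i, rfl⟩
  simpa using h i

section Field

variable {K : Type*} [Field K] {n : ℕ}

theorem single_zero_mem_of_loweringMatrix_invariant [NeZero n] {c : ℕ → K}
    (hc : ∀ i, 0 < i → i < n → c i ≠ 0) {W : Submodule K (Fin n → K)}
    (hY : ∀ v ∈ W, loweringMatrix c *ᵥ v ∈ W) {v : Fin n → K} (hv : v ∈ W) (hv0 : v ≠ 0) :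
    Pi.single 0 1 ∈ W := by
  obtain ⟨k, hsupp⟩ : ∃ k : ℕ, ∀ i : Fin n, k < i → v i = 0 :=
    ⟨n, fun i hi => absurd i.isLt (by omega)⟩
  induction k generalizing v with
  | zero =>
    have hv_eq := eq_single_zero_of_forall_pos_eq_zero hsupp
    have hv₀ : v 0 ≠ 0 := fun h => hv0 (by rw [hv_eq, h, Pi.single_zero])
    have he0 : Pi.single (0 : Fin n) (1 : K) = (v 0)⁻¹ • v :=
      calc Pi.single 0 1 = (v 0)⁻¹ • Pi.single 0 (v 0) := by
            rw [← Pi.single_smul', smul_eq_mul, inv_mul_cancel₀ hv₀]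
        _ = (v 0)⁻¹ • v := by rw [← hv_eq]
    exact he0 ▸ W.smul_mem _ hv
  | succ k ih =>
    by_cases htop : ∃ h : k + 1 < n, v ⟨k + 1, h⟩ ≠ 0
    · obtain ⟨h, hvk⟩ := htop
      refine ih (hY v hv) (fun hYv => ?_) (loweringMatrix_mulVec_apply_eq_zero c hsupp)
      have := congrFun hYv ⟨k, by omega⟩
      rw [loweringMatrix_mulVec_apply, dif_pos h] at this
      exact mul_ne_zero (hc _ k.succ_pos h) hvk this
    · simp only [not_exists, not_not] at htop
      refine ih hv hv0 fun i hi => ?_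
      rcases (Nat.succ_le_of_lt hi).eq_or_lt with h | h
      · rw [show i = ⟨k + 1, by omega⟩ from Fin.ext h.symm]
        exact htop _
      · exact hsupp i h

theorem eq_top_of_raisingMatrix_loweringMatrix_invariant {m : ℕ} {c : ℕ → K}
    (hc : ∀ i, 0 < i → i < m + 1 → c i ≠ 0) {W : Submodule K (Fin (m + 1) → K)}
    (hX : ∀ v ∈ W, raisingMatrix K (m + 1) *ᵥ v ∈ W) (hY : ∀ v ∈ W, loweringMatrix c *ᵥ v ∈ W)
    (hW : W ≠ ⊥) : W = ⊤ := by
  obtain ⟨v, hv, hv0⟩ := W.ne_bot_iff.mp hW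
  exact eq_top_of_forall_single_mem <| single_mem_of_raisingMatrix_invariant hX <|
    single_zero_mem_of_loweringMatrix_invariant hc hY hv hv0

end Field

end Matrix

theorem C_module_simple_general (f : Polynomial ℂ) (n : ℕ) (zdot : ℂ)
    (hne : ∀ i : ℕ, 1 ≤ i → i ≤ n - 1 → zdot + (fun c : ℂ => f.eval c)^[i] (-zdot) ≠ 0) :
    letI φ : ℂ → ℂ := fun c => f.eval c
    letI X : Matrix (Fin n) (Fin n) ℂ :=
      Matrix.of fun i j => if (i : ℕ) = (j : ℕ) + 1 then 1 else 0
    letI H : Matrix (Fin n) (Fin n) ℂ :=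
      Matrix.diagonal fun i => φ^[(i : ℕ)] (-zdot)
    letI Y : Matrix (Fin n) (Fin n) ℂ :=
      Matrix.of fun i j => if (j : ℕ) = (i : ℕ) + 1 then zdot + φ^[(j : ℕ)] (-zdot) else 0
    ∀ W : Submodule ℂ (Fin n → ℂ),
      (∀ v ∈ W, X.mulVec v ∈ W) → (∀ v ∈ W, H.mulVec v ∈ W) →
      (∀ v ∈ W, Y.mulVec v ∈ W) → W = ⊥ ∨ W = ⊤ := by
  intro W hX _ hY
  refine or_iff_not_imp_left.2 fun hW => ?_
  obtain ⟨m, rfl⟩ : ∃ m, n = m + 1 :=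
    Nat.exists_eq_succ_of_ne_zero fun hn => hW <| by
      subst hn; exact Submodule.eq_bot_of_subsingleton
  exact eq_top_of_raisingMatrix_loweringMatrix_invariant (fun i hi hin => hne i hi (by omega))
    hX hY hW

/-- If `ż + f^{(i)}(−ż) ≠ 0` for `i = 1, …, n−1`, then the module `C(ż, n)` on
`ℂⁿ` is simple: the only subspaces invariant under `X`, `H`, `Y` are `0` and `ℂⁿ`. -/
theorem C_module_simple (f : Polynomial ℂ) (n : ℕ) (hn : 1 ≤ n) (zdot : ℂ)
    (hz : zdot + (fun c : ℂ => f.eval c)^[n] (-zdot) = 0)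
    (hne : ∀ i : ℕ, 1 ≤ i → i ≤ n - 1 → zdot + (fun c : ℂ => f.eval c)^[i] (-zdot) ≠ 0) :
    letI φ : ℂ → ℂ := fun c => f.eval c
    letI X : Matrix (Fin n) (Fin n) ℂ :=
      Matrix.of fun i j => if (i : ℕ) = (j : ℕ) + 1 then 1 else 0
    letI H : Matrix (Fin n) (Fin n) ℂ :=
      Matrix.diagonal fun i => φ^[(i : ℕ)] (-zdot)
    letI Y : Matrix (Fin n) (Fin n) ℂ :=
      Matrix.of fun i j => if (j : ℕ) = (i : ℕ) + 1 then zdot + φ^[(j : ℕ)] (-zdot) else 0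
    ∀ W : Submodule ℂ (Fin n → ℂ),
      (∀ v ∈ W, X.mulVec v ∈ W) → (∀ v ∈ W, H.mulVec v ∈ W) →
      (∀ v ∈ W, Y.mulVec v ∈ W) → W = ⊥ ∨ W = ⊤ :=
  C_module_simple_general f n zdot hne
end

section
/- With the setup of C(ż, n), if ż + f^{(i)}(−ż) = 0 for some i ∈ {1, …, n−1}, then span{e_i, e_{i+1}, …, e_{n−1}} is a proper nonzero subspace of ℂ^n invariant under X, H, and Y. Hence the module C(ż, n) is not simple. -/
/-!
The span `W` of `e_i, …, e_{n−1}` consists of the vectors vanishing in the coordinates `k < i`, so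
a matrix preserves `W` once it has no entry from a column `j ≥ i` to a row `k < i`. `X` raises
indices and `H` is diagonal; `Y` lowers indices by one, and its only entry from `W` out of `W`
(from `e_i` to `e_{i−1}`) is `ż + f^{(i)}(−ż) = 0`. Since `1 ≤ i ≤ n − 1`, `e_{n−1} ∈ W` and
`e_0 ∉ W`.
-/

open Polynomial Matrix

section SpanOfSingles

variable {R ι : Type*} [Semiring R] [DecidableEq ι] (p : ι → Prop)

theorem span_single_one_ne_bot [Nontrivial R] (h : ∃ j, p j) :
    Submodule.span R {v : ι → R | ∃ j, p j ∧ v = Pi.single j 1} ≠ ⊥ := by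
  obtain ⟨j, hj⟩ := h
  rw [Ne, Submodule.span_eq_bot, not_forall]
  exact ⟨Pi.single j 1, Classical.not_imp.2 ⟨⟨j, hj, rfl⟩, by simp⟩⟩

variable [Fintype ι]

theorem span_single_one_eq_pi :
    Submodule.span R {v : ι → R | ∃ j, p j ∧ v = Pi.single j 1} =
      Submodule.pi {k | ¬ p k} (fun _ => ⊥) := by
  apply le_antisymm
  · rw [Submodule.span_le]
    rintro _ ⟨j, hj, rfl⟩ k hk
    have hkj : k ≠ j := fun h => hk (h ▸ hj)
    simp [hkj]
  · intro v hv
    rw [← Finset.univ_sum_single v]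
    refine Submodule.sum_mem _ fun j _ => ?_
    by_cases hj : p j
    · rw [← mul_one (v j), ← smul_eq_mul, Pi.single_smul']
      exact Submodule.smul_mem _ _ (Submodule.subset_span ⟨j, hj, rfl⟩)
    · simp [show v j = 0 from hv j hj]

theorem span_single_one_ne_top [Nontrivial R] (h : ∃ k, ¬ p k) :
    Submodule.span R {v : ι → R | ∃ j, p j ∧ v = Pi.single j 1} ≠ ⊤ := by
  obtain ⟨k, hk⟩ := h
  rw [span_single_one_eq_pi, Ne, Submodule.eq_top_iff']
  intro hall
  simpa using hall (Pi.single k 1) k hk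

theorem mulVec_mem_span_single_one {M : Matrix ι ι R}
    (hM : ∀ k j, ¬ p k → p j → M k j = 0) {v : ι → R}
    (hv : v ∈ Submodule.span R {v : ι → R | ∃ j, p j ∧ v = Pi.single j 1}) :
    M *ᵥ v ∈ Submodule.span R {v : ι → R | ∃ j, p j ∧ v = Pi.single j 1} := by
  rw [span_single_one_eq_pi] at hv ⊢
  intro k hk
  refine Submodule.sum_mem _ fun j _ => ?_
  by_cases hj : p j
  · simp [hM k j hk hj]
  · simp [show v j = 0 from hv j hj]

end SpanOfSingles

theorem C_module_not_simple_general (f : Polynomial ℂ) (n : ℕ) (zdot : ℂ)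
    (i : ℕ) (hi1 : 1 ≤ i) (hi2 : i ≤ n - 1)
    (hzi : zdot + (fun c : ℂ => f.eval c)^[i] (-zdot) = 0) :
    letI φ : ℂ → ℂ := fun c => f.eval c
    letI X : Matrix (Fin n) (Fin n) ℂ :=
      Matrix.of fun k j => if (k : ℕ) = (j : ℕ) + 1 then 1 else 0
    letI H : Matrix (Fin n) (Fin n) ℂ :=
      Matrix.diagonal fun k => φ^[(k : ℕ)] (-zdot)
    letI Y : Matrix (Fin n) (Fin n) ℂ :=
      Matrix.of fun k j => if (j : ℕ) = (k : ℕ) + 1 then zdot + φ^[(j : ℕ)] (-zdot) else 0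
    letI W : Submodule ℂ (Fin n → ℂ) :=
      Submodule.span ℂ {v : Fin n → ℂ | ∃ j : Fin n, i ≤ (j : ℕ) ∧ v = Pi.single j 1}
    W ≠ ⊥ ∧ W ≠ ⊤ ∧ (∀ v ∈ W, X.mulVec v ∈ W) ∧ (∀ v ∈ W, H.mulVec v ∈ W) ∧
      (∀ v ∈ W, Y.mulVec v ∈ W) := by
  refine ⟨span_single_one_ne_bot _ ⟨⟨n - 1, by omega⟩, hi2⟩,
    span_single_one_ne_top _ ⟨⟨0, by omega⟩, Nat.not_le_of_lt hi1⟩,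
    fun _ => mulVec_mem_span_single_one _ ?X, fun _ => mulVec_mem_span_single_one _ ?H,
    fun _ => mulVec_mem_span_single_one _ ?Y⟩
  case X =>
    intro k j hk hj
    simp only [of_apply, ite_eq_right_iff]
    omega
  case H =>
    intro k j hk hj
    exact diagonal_apply_ne _ fun hkj => hk (hkj ▸ hj)
  case Y =>
    intro k j hk hj
    simp only [of_apply, ite_eq_right_iff]
    intro hjk
    rwa [show (j : ℕ) = i by omega]

/-- If `ż + f^{(i)}(−ż) = 0` for some `1 ≤ i ≤ n−1`, then
`span{e_i, …, e_{n−1}}` is a proper nonzero subspace of `ℂⁿ` invariant under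
`X`, `H`, `Y`; hence `C(ż, n)` is not simple. -/
theorem C_module_not_simple (f : Polynomial ℂ) (n : ℕ) (hn : 1 ≤ n) (zdot : ℂ)
    (hz : zdot + (fun c : ℂ => f.eval c)^[n] (-zdot) = 0)
    (i : ℕ) (hi1 : 1 ≤ i) (hi2 : i ≤ n - 1)
    (hzi : zdot + (fun c : ℂ => f.eval c)^[i] (-zdot) = 0) :
    letI φ : ℂ → ℂ := fun c => f.eval c
    letI X : Matrix (Fin n) (Fin n) ℂ :=
      Matrix.of fun k j => if (k : ℕ) = (j : ℕ) + 1 then 1 else 0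
    letI H : Matrix (Fin n) (Fin n) ℂ :=
      Matrix.diagonal fun k => φ^[(k : ℕ)] (-zdot)
    letI Y : Matrix (Fin n) (Fin n) ℂ :=
      Matrix.of fun k j => if (j : ℕ) = (k : ℕ) + 1 then zdot + φ^[(j : ℕ)] (-zdot) else 0
    letI W : Submodule ℂ (Fin n → ℂ) :=
      Submodule.span ℂ {v : Fin n → ℂ | ∃ j : Fin n, i ≤ (j : ℕ) ∧ v = Pi.single j 1}
    W ≠ ⊥ ∧ W ≠ ⊤ ∧ (∀ v ∈ W, X.mulVec v ∈ W) ∧ (∀ v ∈ W, H.mulVec v ∈ W) ∧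
      (∀ v ∈ W, Y.mulVec v ∈ W) :=
  C_module_not_simple_general f n zdot i hi1 hi2 hzi
end

section
/- Let f ∈ ℂ[h], λ ∈ S_f with exact period n ≥ 1 (i.e., λ(i+n) = λ(i) for all i, and λ(i) = λ(j) implies n | i − j), ż ∈ ℂ, a ∈ ℂ*. Then the module A'(λ, ż, a) on ℂ^n (with H e_i = λ(i) e_i, X e_i = e_{i+1} cyclically with X e_{n−1} = a e_0, Y e_i = (λ(i)+ż) e_{i−1} cyclically with Y e_0 = (λ(0)+ż)a^{−1} e_{n−1}) is simple: its only subspaces invariant under X, H, Y are 0 and ℂ^n. -/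
/-!
Exact periodicity makes the eigenvalues `λ(0), …, λ(n-1)` of the diagonal `H` pairwise distinct,
so applying `∏_{j ≠ i} (H - λ(j))` to a vector of `W` with nonzero `i`-th coordinate isolates
`e_i ∈ W`. Since `X` sends each `e_j` to a nonzero multiple of `e_{j+1 mod n}`, iterating `X`
from `e_i` reaches every basis vector, so `W` is everything.
-/

open Matrix

section DiagonalInvariant

variable {ι : Type*} [Fintype ι] [DecidableEq ι]

theorem prod_sub_mul_mem_of_diagonal_invariant {K : Type*} [CommRing K] {d : ι → K}
    {W : Submodule K (ι → K)} (hW : ∀ v ∈ W, diagonal d *ᵥ v ∈ W)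
    {v : ι → K} (hv : v ∈ W) (S : Finset ι) :
    (fun k => (∏ j ∈ S, (d k - d j)) * v k) ∈ W := by
  induction S using Finset.induction with
  | empty => simpa using hv
  | insert j S hj ih =>
    convert W.sub_mem (hW _ ih) (W.smul_mem (d j) ih) using 1
    funext k
    simp only [Finset.prod_insert hj, mulVec_diagonal, Pi.sub_apply, Pi.smul_apply, smul_eq_mul]
    ring

theorem single_mem_of_diagonal_invariant {K : Type*} [Field K] {d : ι → K}
    {W : Submodule K (ι → K)} (hd : Function.Injective d)
    (hW : ∀ v ∈ W, diagonal d *ᵥ v ∈ W) {v : ι → K} (hv : v ∈ W) {i : ι} (hvi : v i ≠ 0) :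
    Pi.single i 1 ∈ W := by
  set c := ∏ j ∈ Finset.univ.erase i, (d i - d j)
  have hc : c ≠ 0 := Finset.prod_ne_zero_iff.mpr fun j hj =>
    sub_ne_zero.mpr fun h => Finset.ne_of_mem_erase hj (hd h).symm
  have hproj : (fun k => (∏ j ∈ Finset.univ.erase i, (d k - d j)) * v k)
      = (c * v i) • Pi.single i 1 := by
    funext k
    by_cases hk : k = i
    · subst hk; simp [c]
    · rw [Finset.prod_eq_zero (Finset.mem_erase.mpr ⟨hk, Finset.mem_univ k⟩) (sub_self _)]
      simp [hk]
  rw [← W.smul_mem_iff (mul_ne_zero hc hvi), ← hproj]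
  exact prod_sub_mul_mem_of_diagonal_invariant hW hv _

end DiagonalInvariant

theorem Submodule.eq_top_of_forall_single_mem {K ι : Type*} [Semiring K] [Finite ι] [DecidableEq ι]
    {W : Submodule K (ι → K)} (h : ∀ i, Pi.single i 1 ∈ W) : W = ⊤ := by
  have := Fintype.ofFinite ι
  rw [eq_top_iff, ← (Pi.basisFun K ι).span_eq, Submodule.span_le]
  rintro _ ⟨i, rfl⟩
  simpa using h i

theorem Fin.induction_finRotate {n : ℕ} {P : Fin n → Prop} {i : Fin n} (hi : P i)
    (hstep : ∀ j, P j → P (finRotate n j)) (k : Fin n) : P k := by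
  have := NeZero.of_pos i.pos
  have hk : (finRotate n)^[(k - i : Fin n).1] i = k := by
    rw [← finCycle_eq_finRotate_iterate, finCycle_apply, add_sub_cancel]
  exact hk ▸ Function.Iterate.rec P hi hstep _

theorem val_finRotate_eq_mod {n : ℕ} (j : Fin n) : (finRotate n j : ℕ) = ((j : ℕ) + 1) % n := by
  have := NeZero.of_pos j.pos
  simp [Fin.val_add]

def cyclicShift {K : Type*} [Zero K] [One K] (n : ℕ) (a : K) : Matrix (Fin n) (Fin n) K :=
  of fun i j => if (i : ℕ) = ((j : ℕ) + 1) % n then (if (j : ℕ) = n - 1 then a else 1) else 0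

theorem cyclicShift_mulVec_single {K : Type*} [Semiring K] {n : ℕ} (a : K) (j : Fin n) :
    cyclicShift n a *ᵥ Pi.single j 1
      = (if (j : ℕ) = n - 1 then a else 1) • Pi.single (finRotate n j) 1 := by
  funext k
  simp only [mulVec_single_one, col_apply, cyclicShift, of_apply, ← val_finRotate_eq_mod,
    ← Fin.ext_iff, Pi.smul_apply, smul_eq_mul, Pi.single_apply]
  split_ifs <;> simp only [mul_one, mul_zero]

theorem eq_top_of_single_mem_of_cyclicShift_invariant {K : Type*} [DivisionRing K] {n : ℕ} {a : K}
    (ha : a ≠ 0) {W : Submodule K (Fin n → K)} (hW : ∀ v ∈ W, cyclicShift n a *ᵥ v ∈ W)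
    {i : Fin n} (hi : Pi.single i 1 ∈ W) : W = ⊤ := by
  refine Submodule.eq_top_of_forall_single_mem fun k =>
    Fin.induction_finRotate (P := fun j => Pi.single j 1 ∈ W) hi (fun j hj => ?_) k
  have hc : (if (j : ℕ) = n - 1 then a else 1) ≠ 0 := by split_ifs <;> simp [ha]
  rw [← W.smul_mem_iff hc, ← cyclicShift_mulVec_single]
  exact hW _ hj

theorem injective_fin_of_eq_imp_dvd_sub {α : Type*} {n : ℕ} {lam : ℤ → α}
    (hexact : ∀ i j : ℤ, lam i = lam j → (n : ℤ) ∣ i - j) :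
    Function.Injective fun k : Fin n => lam (k : ℕ) := fun k l hkl =>
  Fin.ext <| (Nat.modEq_iff_dvd.mpr (by exact_mod_cast hexact _ _ hkl)).eq_of_lt_of_lt l.2 k.2 |>.symm

theorem A'_module_simple_general (lam : ℤ → ℂ)
    (n : ℕ) (hexact : ∀ i j : ℤ, lam i = lam j → (n : ℤ) ∣ i - j)
    (zdot : ℂ) (a : ℂ) (ha : a ≠ 0) :
    letI H : Matrix (Fin n) (Fin n) ℂ := Matrix.diagonal fun i => lam (i : ℕ)
    letI X : Matrix (Fin n) (Fin n) ℂ :=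
      Matrix.of fun i j =>
        if (i : ℕ) = ((j : ℕ) + 1) % n then (if (j : ℕ) = n - 1 then a else 1) else 0
    letI Y : Matrix (Fin n) (Fin n) ℂ :=
      Matrix.of fun i j =>
        if (j : ℕ) = ((i : ℕ) + 1) % n then
          (lam (j : ℕ) + zdot) * (if (j : ℕ) = 0 then a⁻¹ else 1) else 0
    ∀ W : Submodule ℂ (Fin n → ℂ),
      (∀ v ∈ W, X.mulVec v ∈ W) → (∀ v ∈ W, H.mulVec v ∈ W) →
      (∀ v ∈ W, Y.mulVec v ∈ W) → W = ⊥ ∨ W = ⊤ := by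
  intro W hXW hHW _
  rcases eq_or_ne W ⊥ with hbot | hbot
  · exact Or.inl hbot
  obtain ⟨v, hvW, hv0⟩ := Submodule.exists_mem_ne_zero_of_ne_bot hbot
  obtain ⟨i, hvi⟩ := Function.ne_iff.mp hv0
  have hi : Pi.single i 1 ∈ W :=
    single_mem_of_diagonal_invariant (injective_fin_of_eq_imp_dvd_sub hexact) hHW hvW hvi
  exact Or.inr (eq_top_of_single_mem_of_cyclicShift_invariant ha hXW hi)

/-- If `λ ∈ S_f` has exact period `n` and `a ≠ 0`, the module `A'(λ, ż, a)` on
`ℂⁿ` is simple: the only subspaces invariant under `X`, `H`, `Y` are `0` and `ℂⁿ`. -/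
theorem A'_module_simple (f : Polynomial ℂ) (lam : ℤ → ℂ)
    (hlam : ∀ i : ℤ, f.eval (lam i) = lam (i + 1))
    (n : ℕ) (hn : 1 ≤ n) (hper : ∀ i : ℤ, lam (i + n) = lam i)
    (hexact : ∀ i j : ℤ, lam i = lam j → (n : ℤ) ∣ i - j)
    (zdot : ℂ) (a : ℂ) (ha : a ≠ 0) :
    letI H : Matrix (Fin n) (Fin n) ℂ := Matrix.diagonal fun i => lam (i : ℕ)
    letI X : Matrix (Fin n) (Fin n) ℂ :=
      Matrix.of fun i j =>
        if (i : ℕ) = ((j : ℕ) + 1) % n then (if (j : ℕ) = n - 1 then a else 1) else 0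
    letI Y : Matrix (Fin n) (Fin n) ℂ :=
      Matrix.of fun i j =>
        if (j : ℕ) = ((i : ℕ) + 1) % n then
          (lam (j : ℕ) + zdot) * (if (j : ℕ) = 0 then a⁻¹ else 1) else 0
    ∀ W : Submodule ℂ (Fin n → ℂ),
      (∀ v ∈ W, X.mulVec v ∈ W) → (∀ v ∈ W, H.mulVec v ∈ W) →
      (∀ v ∈ W, Y.mulVec v ∈ W) → W = ⊥ ∨ W = ⊤ :=
  A'_module_simple_general lam n hexact zdot a ha
end

section
/- Let f ∈ ℂ be a constant polynomial, say f(h) = c. Then the generalized Heisenberg algebra H(f) has zero divisors: (h − c)·x = 0 while h − c ≠ 0 and x ≠ 0. -/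
open Polynomial

/-- Defining relations of the generalized Heisenberg algebra `H(f)`: generators
`x = ι 0`, `h = ι 1`, `y = ι 2` with `hx = x f(h)`, `yh = f(h) y`,
`yx − xy = f(h) − h`. -/
inductive GHARel (f : Polynomial ℂ) : FreeAlgebra ℂ (Fin 3) → FreeAlgebra ℂ (Fin 3) → Prop
  | hx : GHARel f (FreeAlgebra.ι ℂ 1 * FreeAlgebra.ι ℂ 0)
      (FreeAlgebra.ι ℂ 0 * aeval (FreeAlgebra.ι ℂ 1) f)
  | yh : GHARel f (FreeAlgebra.ι ℂ 2 * FreeAlgebra.ι ℂ 1)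
      (aeval (FreeAlgebra.ι ℂ 1) f * FreeAlgebra.ι ℂ 2)
  | comm : GHARel f (FreeAlgebra.ι ℂ 2 * FreeAlgebra.ι ℂ 0)
      (FreeAlgebra.ι ℂ 0 * FreeAlgebra.ι ℂ 2 + aeval (FreeAlgebra.ι ℂ 1) f
        - FreeAlgebra.ι ℂ 1)

/-- The generalized Heisenberg algebra `H(f)`. -/
abbrev GHA (f : Polynomial ℂ) := RingQuot (GHARel f)

noncomputable def GHA.x (f : Polynomial ℂ) : GHA f :=
  RingQuot.mkAlgHom ℂ (GHARel f) (FreeAlgebra.ι ℂ 0)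
noncomputable def GHA.h (f : Polynomial ℂ) : GHA f :=
  RingQuot.mkAlgHom ℂ (GHARel f) (FreeAlgebra.ι ℂ 1)
noncomputable def GHA.y (f : Polynomial ℂ) : GHA f :=
  RingQuot.mkAlgHom ℂ (GHARel f) (FreeAlgebra.ι ℂ 2)
/-! The relation `h x = x f(h)` with `f = c` gives `(h - c) x = 0` directly. To see that `h - c`
and `x` are nonzero, represent `H(c)` on `ℂ²` by `x ↦ E₀₀`, `h ↦ c + E₀₁`, `y ↦ E₀₁`: the
relations hold because `E₀₁ E₀₀ = E₀₁ E₀₁ = 0` and `E₀₀ E₀₁ = E₀₁`, and `x`, `h - c` are sent to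
the nonzero matrices `E₀₀`, `E₀₁`. -/

namespace GHA

section Lift

variable {f : ℂ[X]} {A : Type*} [Ring A] [Algebra ℂ A]

noncomputable def lift (x h y : A) (hx : h * x = x * aeval h f) (hy : y * h = aeval h f * y)
    (hc : y * x = x * y + aeval h f - h) : GHA f →ₐ[ℂ] A :=
  RingQuot.liftAlgHom ℂ ⟨FreeAlgebra.lift ℂ ![x, h, y], by
    rintro _ _ ⟨⟩ <;> simpa [← aeval_algHom_apply]⟩

variable (x h y : A) (hx : h * x = x * aeval h f) (hy : y * h = aeval h f * y)
    (hc : y * x = x * y + aeval h f - h)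

@[simp]
theorem lift_x : lift x h y hx hy hc (GHA.x f) = x := by
  simp [lift, GHA.x, RingQuot.liftAlgHom_mkAlgHom_apply]

@[simp]
theorem lift_h : lift x h y hx hy hc (GHA.h f) = h := by
  simp [lift, GHA.h, RingQuot.liftAlgHom_mkAlgHom_apply]

end Lift

theorem h_mul_x (f : ℂ[X]) : h f * x f = x f * aeval (h f) f := by
  simpa [GHA.h, GHA.x, aeval_algHom_apply] using RingQuot.mkAlgHom_rel ℂ (GHARel.hx (f := f))

theorem h_sub_algebraMap_mul_x (c : ℂ) : (h (C c) - algebraMap ℂ _ c) * x (C c) = 0 := by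
  rw [sub_mul, h_mul_x, aeval_C, Algebra.commutes, sub_self]

open Matrix in
noncomputable def constMatrixRep (c : ℂ) : GHA (C c) →ₐ[ℂ] Matrix (Fin 2) (Fin 2) ℂ :=
  lift (single 0 0 1) (algebraMap ℂ _ c + single 0 1 1) (single 0 1 1)
    (by simp [add_mul, Algebra.commutes]) (by simp [mul_add, Algebra.commutes])
    (by simp [add_comm])

end GHA

/-- If `f = c` is a constant polynomial, then `H(f)` has zero divisors:
`(h − c) x = 0` while `h − c ≠ 0` and `x ≠ 0`. -/
theorem GHA_const_zero_divisors (c : ℂ) :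
    (GHA.h (C c) - algebraMap ℂ (GHA (C c)) c) * GHA.x (C c) = 0 ∧
    GHA.h (C c) - algebraMap ℂ (GHA (C c)) c ≠ 0 ∧ GHA.x (C c) ≠ 0 := by
  refine ⟨GHA.h_sub_algebraMap_mul_x c, fun hzero => ?_, fun xzero => ?_⟩
  · simpa [GHA.constMatrixRep] using congrArg (fun a => GHA.constMatrixRep c a 0 1) hzero
  · simpa [GHA.constMatrixRep] using congrArg (fun a => GHA.constMatrixRep c a 0 0) xzero
end

section
/- Let f ∈ ℂ[h] with deg f ≥ 1 (f not constant), and let λ ∈ S_f with λ(i) + ż ≠ 0 for all i ∈ ℤ and λ not periodic (λ(i) = λ(i+m) for all i implies m = 0). Define an action of H(f) on ℂ[t, t^{−1}] by h·tⁱ = λ(i)tⁱ, x·tⁱ = t^{i+1}, y·tⁱ = (λ(i)+ż)t^{i−1}. Then every nonzero H(f)-submodule of ℂ[t,t^{−1}] equals the whole module, i.e., this module A(λ, ż) is simple. -/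
/-!
The operators `x`, `h`, `y` are weighted shifts of the basis `tⁿ` (by `1`, `0`, `-1`). Take a
nonzero `v` of minimal support in an invariant subspace `W`. If its support contained `i ≠ j`,
then, since `λ(n + 1) = f(λ(n))` and `λ` is not periodic, `λ(i - k) ≠ λ(j - k)` for some `k ≥ 0`,
and `(h - λ(j - k)) yᵏ` would map `v` to a nonzero element of `W` of smaller support (the weights
`λ(n) + ż` of `y` never vanish). So `W` contains some `tⁱ`, and `x` and `y` carry it to every `tⁿ`.
-/

open Finsupp

namespace Finsupp

variable {G K : Type*} [AddCommGroup G]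

section CommRing

variable [CommRing K]

def IsWeightedShift (T : Module.End K (G →₀ K)) (a : G) (w : G → K) : Prop :=
  ∀ n c, T (single n c) = single (n + a) (w n * c)

namespace IsWeightedShift

variable {S T : Module.End K (G →₀ K)} {a b : G} {v w : G → K}

theorem apply_add (hT : IsWeightedShift T a w) (x : G →₀ K) (n : G) :
    T x (n + a) = w n * x n := by
  induction x using induction_linear with
  | zero => simp
  | add x y hx hy => simp [hx, hy, mul_add]
  | single m c =>
    classical
    rw [hT]
    simp only [single_apply, add_left_inj]
    split_ifs <;> simp_all

theorem comp (hS : IsWeightedShift S b v) (hT : IsWeightedShift T a w) :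
    IsWeightedShift (S * T) (a + b) (fun n => v (n + a) * w n) := by
  intro n c
  rw [Module.End.mul_apply, hT, hS, add_assoc, mul_assoc]

theorem pow (hT : IsWeightedShift T a w) (k : ℕ) :
    IsWeightedShift (T ^ k) (k • a) (fun n => ∏ s ∈ Finset.range k, w (n + s • a)) := by
  induction k with
  | zero => intro n c; simp
  | succ k ih =>
    intro n c
    rw [pow_succ, ih.comp hT]
    simp only [Finset.prod_range_succ', succ_nsmul', zero_smul, add_zero, add_assoc]

theorem sub_smul_one (hT : IsWeightedShift T 0 w) (c : K) :
    IsWeightedShift (T - c • 1) 0 (fun n => w n - c) := by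
  intro n x
  rw [LinearMap.sub_apply, hT, LinearMap.smul_apply, Module.End.one_apply, smul_single,
    add_zero, ← single_sub, smul_eq_mul, sub_mul]

theorem support_apply_subset_erase [DecidableEq G] (hT : IsWeightedShift T a w) {j : G}
    (hj : w j = 0) (x : G →₀ K) :
    (T x).support ⊆ (x.support.erase j).map (addRightEmbedding a) := by
  intro m hm
  have hm' : w (m - a) * x (m - a) ≠ 0 := by
    rwa [← hT.apply_add, sub_add_cancel, ← mem_support_iff]
  refine Finset.mem_map.mpr ⟨m - a, Finset.mem_erase.mpr ⟨?_, ?_⟩, sub_add_cancel m a⟩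
  · rintro rfl
    exact hm' (by rw [hj, zero_mul])
  · exact mem_support_iff.mpr (right_ne_zero_of_mul hm')

end IsWeightedShift

end CommRing

section Field

variable [Field K] {W : Submodule K (G →₀ K)}

theorem IsWeightedShift.single_one_mem {T : Module.End K (G →₀ K)} {a : G} {w : G → K}
    (hT : IsWeightedShift T a w) (hTW : Set.MapsTo T W W) {n : G}
    (hn : w n ≠ 0) (h : single n 1 ∈ W) : single (n + a) 1 ∈ W := by
  have := W.smul_mem (w n)⁻¹ (hTW h)
  rwa [hT, smul_single, smul_eq_mul, mul_one, inv_mul_cancel₀ hn] at this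

theorem exists_single_one_mem_of_separating (hW : W ≠ ⊥)
    (hsep : ∀ i j, i ≠ j → ∃ (T : Module.End K (G →₀ K)) (a : G) (d : G → K),
      Set.MapsTo T W W ∧ IsWeightedShift T a d ∧ d i ≠ 0 ∧ d j = 0) :
    ∃ i, single i 1 ∈ W := by
  classical
  obtain ⟨v, hmin⟩ := exists_minimalFor_of_wellFoundedLT
    (fun v => v ∈ W ∧ v ≠ 0) (fun v => v.support.card) ((Submodule.ne_bot_iff W).mp hW)
  obtain ⟨hvW, hv0⟩ := hmin.prop
  obtain ⟨i, hi⟩ : ∃ i, v.support = {i} := by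
    refine Finset.card_eq_one.mp
      (le_antisymm ?_ (Finset.card_pos.mpr (support_nonempty_iff.mpr hv0)))
    by_contra! h2
    obtain ⟨i, hi, j, hj, hij⟩ := Finset.one_lt_card.mp h2
    obtain ⟨T, a, d, hTW, hT, hdi, hdj⟩ := hsep i j hij
    have hTv : T v ≠ 0 := fun h => by
      have := hT.apply_add v i
      rw [h, zero_apply] at this
      exact mul_ne_zero hdi (mem_support_iff.mp hi) this.symm
    have hsmaller : (T v).support.card < v.support.card := calc
      _ ≤ (v.support.erase j).card :=
        (Finset.card_le_card (hT.support_apply_subset_erase hdj v)).trans_eq (Finset.card_map _)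
      _ < v.support.card := Finset.card_erase_lt_of_mem hj
    exact hmin.not_lt ⟨hTW hvW, hTv⟩ hsmaller
  obtain ⟨hvi, hv⟩ := support_eq_singleton.mp hi
  rw [hv] at hvW
  exact ⟨i, by simpa [hvi] using W.smul_mem (v i)⁻¹ hvW⟩

end Field

theorem eq_top_of_single_one_mem {K : Type*} [Field K] {W : Submodule K (ℤ →₀ K)}
    {X Y : Module.End K (ℤ →₀ K)} {u w : ℤ → K} (hX : IsWeightedShift X 1 u)
    (hY : IsWeightedShift Y (-1) w) (hu : ∀ n, u n ≠ 0) (hw : ∀ n, w n ≠ 0)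
    (hXW : Set.MapsTo X W W) (hYW : Set.MapsTo Y W W) {i : ℤ} (hi : single i 1 ∈ W) :
    W = ⊤ := by
  have hall : ∀ n, single n (1 : K) ∈ W := fun n => by
    induction n using Int.inductionOn' (b := i) with
    | zero => exact hi
    | succ n _ ih => exact hX.single_one_mem hXW (hu n) ih
    | pred n _ ih => exact hY.single_one_mem hYW (hw n) ih
  rw [eq_top_iff, ← Finsupp.basisSingleOne.span_eq, Submodule.span_le]
  rintro _ ⟨n, rfl⟩
  simpa using hall n

end Finsupp

theorem exists_sub_ne_of_not_periodic {α : Type*} {g : α → α} {lam : ℤ → α}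
    (hlam : ∀ i, g (lam i) = lam (i + 1)) (hnp : ∀ m, (∀ i, lam i = lam (i + m)) → m = 0)
    {i j : ℤ} (hij : i ≠ j) : ∃ k : ℕ, lam (i - k) ≠ lam (j - k) := by
  by_contra! h
  refine hij (sub_eq_zero.mp (hnp (j - i) fun n => ?_)).symm
  induction n using Int.inductionOn' (b := i) with
  | zero => simpa using h 0
  | succ n _ ih => rw [← hlam, ih, hlam]; ring_nf
  | pred n hn _ =>
    convert h (i - (n - 1)).toNat using 2 <;> omega

section Laurent

variable (K : Type*) [Field K] (lam : ℤ → K) (zdot : K)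

noncomputable def laurentX : Module.End K (ℤ →₀ K) :=
  lsum K fun i : ℤ => (lsingle (i + 1) : K →ₗ[K] (ℤ →₀ K))

noncomputable def laurentH : Module.End K (ℤ →₀ K) :=
  lsum K fun i : ℤ => (lsingle i : K →ₗ[K] (ℤ →₀ K)).comp (LinearMap.lsmul K K (lam i))

noncomputable def laurentY : Module.End K (ℤ →₀ K) :=
  lsum K fun i : ℤ =>
    (lsingle (i - 1) : K →ₗ[K] (ℤ →₀ K)).comp (LinearMap.lsmul K K (lam i + zdot))

theorem isWeightedShift_laurentX : IsWeightedShift (laurentX K) 1 1 := by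
  intro n c
  simp [laurentX]

theorem isWeightedShift_laurentH : IsWeightedShift (laurentH K lam) 0 lam := by
  intro n c
  simp [laurentH]

theorem isWeightedShift_laurentY :
    IsWeightedShift (laurentY K lam zdot) (-1) (fun n => lam n + zdot) := by
  intro n c
  simp only [laurentY, lsum_single, LinearMap.comp_apply, LinearMap.lsmul_apply, smul_eq_mul,
    lsingle_apply, sub_eq_add_neg]

variable {K lam zdot}

theorem exists_separating_weightedShift_laurent {g : K → K} (hlam : ∀ i, g (lam i) = lam (i + 1))
    (hz : ∀ i, lam i + zdot ≠ 0) (hnp : ∀ m, (∀ i, lam i = lam (i + m)) → m = 0)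
    {W : Submodule K (ℤ →₀ K)} (hHW : Set.MapsTo (laurentH K lam) W W)
    (hYW : Set.MapsTo (laurentY K lam zdot) W W) {i j : ℤ} (hij : i ≠ j) :
    ∃ (T : Module.End K (ℤ →₀ K)) (a : ℤ) (d : ℤ → K),
      Set.MapsTo T W W ∧ IsWeightedShift T a d ∧ d i ≠ 0 ∧ d j = 0 := by
  obtain ⟨k, hk⟩ := exists_sub_ne_of_not_periodic hlam hnp hij
  set c := lam (j - k)
  have hT := ((isWeightedShift_laurentH K lam).sub_smul_one c).comp
    ((isWeightedShift_laurentY K lam zdot).pow k)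
  refine ⟨_, _, _, ?_, hT, ?_, ?_⟩
  · have hHc : Set.MapsTo (laurentH K lam - c • 1 : Module.End K (ℤ →₀ K)) W W :=
      fun v hv => by simpa using W.sub_mem (hHW hv) (W.smul_mem c hv)
    rw [Module.End.coe_mul, Module.End.coe_pow]
    exact hHc.comp (hYW.iterate k)
  · exact mul_ne_zero (sub_ne_zero.mpr (by simpa [sub_eq_add_neg] using hk))
      (Finset.prod_ne_zero_iff.mpr fun s _ => hz _)
  · simp [c, sub_eq_add_neg]

end Laurent

theorem A_module_simple_general (f : Polynomial ℂ)
    (lam : ℤ → ℂ) (hlam : ∀ i : ℤ, f.eval (lam i) = lam (i + 1))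
    (zdot : ℂ) (hz : ∀ i : ℤ, lam i + zdot ≠ 0)
    (hnp : ∀ m : ℤ, (∀ i : ℤ, lam i = lam (i + m)) → m = 0) :
    letI Xop : (ℤ →₀ ℂ) →ₗ[ℂ] (ℤ →₀ ℂ) :=
      Finsupp.lsum ℂ fun i : ℤ => (Finsupp.lsingle (i + 1) : ℂ →ₗ[ℂ] (ℤ →₀ ℂ))
    letI Hop : (ℤ →₀ ℂ) →ₗ[ℂ] (ℤ →₀ ℂ) :=
      Finsupp.lsum ℂ fun i : ℤ =>
        (Finsupp.lsingle i : ℂ →ₗ[ℂ] (ℤ →₀ ℂ)).comp (LinearMap.lsmul ℂ ℂ (lam i))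
    letI Yop : (ℤ →₀ ℂ) →ₗ[ℂ] (ℤ →₀ ℂ) :=
      Finsupp.lsum ℂ fun i : ℤ =>
        (Finsupp.lsingle (i - 1) : ℂ →ₗ[ℂ] (ℤ →₀ ℂ)).comp
          (LinearMap.lsmul ℂ ℂ (lam i + zdot))
    ∀ W : Submodule ℂ (ℤ →₀ ℂ), W ≠ ⊥ →
      (∀ v ∈ W, Xop v ∈ W) → (∀ v ∈ W, Hop v ∈ W) → (∀ v ∈ W, Yop v ∈ W) →
      W = ⊤ := by
  intro W hW hXW hHW hYW
  obtain ⟨i, hi⟩ := exists_single_one_mem_of_separating hW fun i j hij =>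
    exists_separating_weightedShift_laurent (g := fun x => f.eval x) hlam hz hnp hHW hYW hij
  exact eq_top_of_single_one_mem (isWeightedShift_laurentX ℂ)
    (isWeightedShift_laurentY ℂ lam zdot) (fun _ => one_ne_zero) hz hXW hYW hi

/-- Let `f` be non-constant, `λ ∈ S_f` non-periodic with `λ(i) + ż ≠ 0` for all
`i`.  On `ℂ[t, t⁻¹]` (realized as `ℤ →₀ ℂ`, `tⁱ = single i 1`), define
`h·tⁱ = λ(i)tⁱ`, `x·tⁱ = t^{i+1}`, `y·tⁱ = (λ(i)+ż)t^{i−1}`.  Then every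
nonzero subspace invariant under `x`, `h`, `y` is the whole space, i.e. the
module `A(λ, ż)` is simple. -/
theorem A_module_simple (f : Polynomial ℂ) (hf : 1 ≤ f.natDegree)
    (lam : ℤ → ℂ) (hlam : ∀ i : ℤ, f.eval (lam i) = lam (i + 1))
    (zdot : ℂ) (hz : ∀ i : ℤ, lam i + zdot ≠ 0)
    (hnp : ∀ m : ℤ, (∀ i : ℤ, lam i = lam (i + m)) → m = 0) :
    letI Xop : (ℤ →₀ ℂ) →ₗ[ℂ] (ℤ →₀ ℂ) :=
      Finsupp.lsum ℂ fun i : ℤ => (Finsupp.lsingle (i + 1) : ℂ →ₗ[ℂ] (ℤ →₀ ℂ))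
    letI Hop : (ℤ →₀ ℂ) →ₗ[ℂ] (ℤ →₀ ℂ) :=
      Finsupp.lsum ℂ fun i : ℤ =>
        (Finsupp.lsingle i : ℂ →ₗ[ℂ] (ℤ →₀ ℂ)).comp (LinearMap.lsmul ℂ ℂ (lam i))
    letI Yop : (ℤ →₀ ℂ) →ₗ[ℂ] (ℤ →₀ ℂ) :=
      Finsupp.lsum ℂ fun i : ℤ =>
        (Finsupp.lsingle (i - 1) : ℂ →ₗ[ℂ] (ℤ →₀ ℂ)).comp
          (LinearMap.lsmul ℂ ℂ (lam i + zdot))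
    ∀ W : Submodule ℂ (ℤ →₀ ℂ), W ≠ ⊥ →
      (∀ v ∈ W, Xop v ∈ W) → (∀ v ∈ W, Hop v ∈ W) → (∀ v ∈ W, Yop v ∈ W) →
      W = ⊤ :=
  A_module_simple_general f lam hlam zdot hz hnp
end
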